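/- arXiv:2510.11191 — 3 statements merged into one kernel-verified Lean document; each statement's English description precedes it below -/
import Mathlib

section
/- Let m and n be integers and let c be a positive integer. Then S(m,n;c)·e((m+n)/c) = Σ_{q,r ≥ 1, qr = c} V_q(m,n;r), where the sum runs over all factorizations of c into an ordered pair of positive integers q, r. -/
open scoped Classical

/-- `e(x) = exp(2πix)`. -/
noncomputable def e (x : ℝ) : ℂ := Complex.exp (2 * Real.pi * Complex.I * x)

/-- The Kloosterman sum `S(m,n;c) = ∑_{α mod c, (α,c)=1} e((αm + α*n)/c)`,
where `α*` is the inverse of `α` modulo `c`. -/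
noncomputable def kloosterman (m n : ℤ) (c : ℕ) : ℂ :=
  ∑ α ∈ Finset.range c,
    if IsUnit (α : ZMod c) then
      e (((α : ℝ) * (m : ℝ) + ((((α : ZMod c)⁻¹).val : ℝ) * (n : ℝ))) / c)
    else 0

/-- `V_q(m,n;c) = ∑_{α mod c, (α(q-α),c)=1} e((α* m + (q-α)* n)/c)`. -/
noncomputable def Vsum (q m n : ℤ) (c : ℕ) : ℂ :=
  ∑ α ∈ Finset.range c,
    if IsUnit ((α : ZMod c)) ∧ IsUnit ((q : ZMod c) - (α : ZMod c)) then
      e (((((α : ZMod c)⁻¹).val : ℝ) * (m : ℝ)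
          + ((((q : ZMod c) - (α : ZMod c))⁻¹).val : ℝ) * (n : ℝ)) / c)
    else 0

/-
Multiplying by `e((m+n)/c)` turns the term of a unit `α` into `e(((α+1)m + (α*+1)n)/c)`.
Sort the units by `q = gcd(α+1, c)` and put `r = c/q`: then `α + 1 = q b` with `b` a unit
mod `r` and `qb - 1` a unit mod `r`, and conversely each such `b` gives the unit `α = qb - 1`
mod `c`. As `α* + 1 = α*(α + 1) = q α* b`, the phase is `e((b m + b (qb-1)* n)/r)`, which is
the term of `V_q(m,n;r)` at `β = b*`.
-/

open Finset ZMod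

section Summation

variable {M : Type*} [AddCommMonoid M]

theorem ZMod.sum_range_eq_sum_val (N : ℕ) [NeZero N] (f : ℕ → M) :
    ∑ a ∈ range N, f a = ∑ x : ZMod N, f x.val := by
  obtain ⟨k, rfl⟩ := Nat.exists_eq_succ_of_ne_zero (NeZero.ne N)
  exact (Fin.sum_univ_eq_sum_range f _).symm

theorem ZMod.inv_inv_of_isUnit {N : ℕ} {x : ZMod N} (hx : IsUnit x) : x⁻¹⁻¹ = x :=
  ZMod.inv_eq_of_mul_eq_one _ _ _ (inv_mul_of_unit x hx)

theorem ZMod.isUnit_inv_of_isUnit {N : ℕ} {x : ZMod N} (hx : IsUnit x) : IsUnit x⁻¹ :=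
  .of_mul_eq_one x (inv_mul_of_unit x hx)

theorem ZMod.castHom_inv {m N : ℕ} (h : m ∣ N) {x : ZMod N} (hx : IsUnit x) :
    castHom h (ZMod m) x⁻¹ = (castHom h (ZMod m) x)⁻¹ :=
  (ZMod.inv_eq_of_mul_eq_one _ _ _ (by rw [← map_mul, mul_inv_of_unit x hx, map_one])).symm

theorem ZMod.sum_isUnit_sub_eq_sum_inv {r : ℕ} [NeZero r] (q : ZMod r) (H : ZMod r → M) :
    ∑ β : ZMod r with IsUnit β ∧ IsUnit (q - β), H β
      = ∑ γ : ZMod r with IsUnit γ ∧ IsUnit (q * γ - 1), H γ⁻¹ := by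
  refine sum_nbij' (·⁻¹) (·⁻¹) ?_ ?_ ?_ ?_ ?_
  · intro β hβ
    simp only [mem_filter, mem_univ, true_and] at hβ ⊢
    have h : q * β⁻¹ - 1 = β⁻¹ * (q - β) := by linear_combination inv_mul_of_unit β hβ.1
    exact ⟨isUnit_inv_of_isUnit hβ.1, h ▸ (isUnit_inv_of_isUnit hβ.1).mul hβ.2⟩
  · intro γ hγ
    simp only [mem_filter, mem_univ, true_and] at hγ ⊢
    have h : q - γ⁻¹ = γ⁻¹ * (q * γ - 1) := by
      linear_combination (-q) * inv_mul_of_unit γ hγ.1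
    exact ⟨isUnit_inv_of_isUnit hγ.1, h ▸ (isUnit_inv_of_isUnit hγ.1).mul hγ.2⟩
  · exact fun β hβ => inv_inv_of_isUnit (mem_filter.1 hβ).2.1
  · exact fun γ hγ => inv_inv_of_isUnit (mem_filter.1 hγ).2.1
  · exact fun β hβ => by rw [inv_inv_of_isUnit (mem_filter.1 hβ).2.1]

theorem ZMod.isUnit_natCast_mul_sub_one_iff (q r b : ℕ) :
    IsUnit ((q * b - 1 : ZMod (q * r))) ↔ IsUnit ((q * b - 1 : ZMod r)) := by
  have hcast (N : ℕ) : (q * b - 1 : ZMod N) = ((q * b - 1 : ℤ) : ZMod N) := by push_cast; rfl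
  rw [hcast, hcast, coe_int_isUnit_iff_isCoprime, coe_int_isUnit_iff_isCoprime, Nat.cast_mul,
    IsCoprime.mul_left_iff]
  exact and_iff_right ⟨b, -1, by ring⟩

theorem ZMod.sum_eq_sum_divisorsAntidiagonal {c : ℕ} [NeZero c] (G : ZMod c → M) :
    ∑ y, G y = ∑ p ∈ c.divisorsAntidiagonal,
      ∑ b ∈ range p.2 with IsUnit ((b : ℕ) : ZMod p.2), G (p.1 * b) := by
  have hmaps : ∀ y ∈ (univ : Finset (ZMod c)),
      (y.val.gcd c, c / y.val.gcd c) ∈ c.divisorsAntidiagonal := fun y _ =>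
    Nat.mem_divisorsAntidiagonal.2 ⟨Nat.mul_div_cancel' (Nat.gcd_dvd_right _ _), NeZero.ne c⟩
  rw [← sum_fiberwise_of_maps_to hmaps]
  refine sum_congr rfl fun ⟨q, r⟩ hp => ?_
  obtain ⟨rfl, hqr⟩ := Nat.mem_divisorsAntidiagonal.1 hp
  have hq : 0 < q := Nat.pos_of_ne_zero (left_ne_zero_of_mul hqr)
  have hval {b : ℕ} (hb : b < r) : ((q : ZMod (q * r)) * b).val = q * b := by
    rw [← Nat.cast_mul, val_cast_of_lt (Nat.mul_lt_mul_of_pos_left hb hq)]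
  have hfiber (y : ZMod (q * r)) :
      y ∈ univ.filter (fun y : ZMod (q * r) =>
        (y.val.gcd (q * r), q * r / y.val.gcd (q * r)) = (q, r)) ↔ y.val.gcd (q * r) = q := by
    simp only [mem_filter, mem_univ, true_and, Prod.ext_iff]
    exact ⟨And.left, fun h => ⟨h, by rw [h, Nat.mul_div_cancel_left r hq]⟩⟩
  have hmul_div {y : ZMod (q * r)} (hy : y.val.gcd (q * r) = q) :
      (q : ZMod (q * r)) * ((y.val / q : ℕ) : ZMod (q * r)) = y := by
    have hdvd := Nat.gcd_dvd_left y.val (q * r)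
    rw [hy] at hdvd
    rw [← Nat.cast_mul, Nat.mul_div_cancel' hdvd, natCast_zmod_val]
  refine sum_nbij' (fun y => y.val / q) (fun b => (q * b : ZMod (q * r))) ?_ ?_ ?_ ?_ ?_
  · intro y hy
    rw [hfiber] at hy
    simp only [mem_filter, mem_range, isUnit_iff_coprime]
    refine ⟨Nat.div_lt_of_lt_mul y.val_lt, ?_⟩
    simpa [hy, Nat.mul_div_cancel_left r hq] using
      Nat.coprime_div_gcd_div_gcd (m := y.val) (n := q * r) (by rwa [hy])
  · intro b hb
    simp only [mem_filter, mem_range, isUnit_iff_coprime] at hb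
    rw [hfiber, hval hb.1, Nat.gcd_mul_left, hb.2, mul_one]
  · intro y hy
    exact hmul_div ((hfiber y).1 hy)
  · intro b hb
    rw [hval (mem_range.1 (mem_filter.1 hb).1), Nat.mul_div_cancel_left b hq]
  · intro y hy
    rw [hmul_div ((hfiber y).1 hy)]

theorem ZMod.sum_isUnit_eq_sum_divisorsAntidiagonal {c : ℕ} [NeZero c] (F : ZMod c → M) :
    ∑ x : ZMod c with IsUnit x, F x
      = ∑ p ∈ c.divisorsAntidiagonal,
          ∑ b ∈ range p.2 with
            IsUnit ((b : ℕ) : ZMod p.2) ∧ IsUnit ((p.1 : ZMod p.2) * b - 1),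
            F (p.1 * b - 1) := by
  rw [sum_filter, ← (Equiv.subRight 1).sum_comp, sum_eq_sum_divisorsAntidiagonal]
  refine sum_congr rfl fun ⟨q, r⟩ hp => ?_
  obtain ⟨rfl, -⟩ := Nat.mem_divisorsAntidiagonal.1 hp
  simp only [Equiv.subRight_apply, ← sum_filter, filter_filter, isUnit_natCast_mul_sub_one_iff]

end Summation

theorem e_intCast_div (N : ℕ) [NeZero N] (j : ℤ) : e (j / N) = stdAddChar (j : ZMod N) := by
  rw [stdAddChar_coe, e]
  push_cast
  ring_nf

theorem e_val_mul_add_val_mul_div {N : ℕ} [NeZero N] (a b : ZMod N) (m n : ℤ) :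
    e ((a.val * m + b.val * n) / N) = stdAddChar (a * (m : ZMod N) + b * (n : ZMod N)) := by
  simpa using e_intCast_div N (a.val * m + b.val * n)

theorem stdAddChar_natCast_mul {q r : ℕ} [NeZero q] [NeZero r] (y : ZMod (q * r)) :
    stdAddChar ((q : ZMod (q * r)) * y) = stdAddChar (castHom (dvd_mul_left r q) (ZMod r) y) := by
  rw [← natCast_zmod_val y, map_natCast, ← Nat.cast_mul, ← Int.cast_natCast, stdAddChar_coe,
    ← Int.cast_natCast (R := ZMod r), stdAddChar_coe]
  have hq : (q : ℂ) ≠ 0 := Nat.cast_ne_zero.2 (NeZero.ne q)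
  push_cast
  congr 1
  field_simp

theorem kloosterman_eq_sum_stdAddChar (m n : ℤ) (c : ℕ) [NeZero c] :
    kloosterman m n c
      = ∑ x : ZMod c with IsUnit x, stdAddChar (x * (m : ZMod c) + x⁻¹ * (n : ZMod c)) := by
  rw [kloosterman, sum_range_eq_sum_val, sum_filter]
  simp only [natCast_zmod_val, e_val_mul_add_val_mul_div]

theorem Vsum_eq_sum_stdAddChar (q m n : ℤ) (r : ℕ) [NeZero r] :
    Vsum q m n r
      = ∑ b ∈ range r with IsUnit ((b : ℕ) : ZMod r) ∧ IsUnit ((q : ZMod r) * b - 1),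
          stdAddChar (((b : ℕ) : ZMod r) * (m : ZMod r)
            + (b : ZMod r) * ((q : ZMod r) * b - 1)⁻¹ * (n : ZMod r)) := by
  rw [Vsum, sum_filter, sum_range_eq_sum_val, sum_range_eq_sum_val]
  simp only [natCast_zmod_val, e_val_mul_add_val_mul_div]
  rw [← sum_filter, ← sum_filter, sum_isUnit_sub_eq_sum_inv]
  refine sum_congr rfl fun γ hγ => ?_
  obtain ⟨hγ, hqγ⟩ := (mem_filter.1 hγ).2
  have hinv : ((q : ZMod r) - γ⁻¹)⁻¹ = γ * (q * γ - 1)⁻¹ :=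
    ZMod.inv_eq_of_mul_eq_one _ _ _ <| by
      linear_combination mul_inv_of_unit _ hqγ - (q * γ - 1)⁻¹ * inv_mul_of_unit γ hγ
  rw [inv_inv_of_isUnit hγ, hinv]

theorem stdAddChar_kloosterman_term_mul {q r : ℕ} [NeZero q] [NeZero r] (b : ℕ) (m n : ℤ)
    (hx : IsUnit ((q * b - 1 : ZMod (q * r)))) :
    stdAddChar ((q * b - 1 : ZMod (q * r)) * (m : ZMod (q * r))
          + (q * b - 1 : ZMod (q * r))⁻¹ * (n : ZMod (q * r)))
        * stdAddChar ((m + n : ℤ) : ZMod (q * r))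
      = stdAddChar (((b : ℕ) : ZMod r) * (m : ZMod r)
          + (b : ZMod r) * ((q : ZMod r) * b - 1)⁻¹ * (n : ZMod r)) := by
  generalize hxdef : (q * b - 1 : ZMod (q * r)) = x at hx
  have hsum : x * m + x⁻¹ * n + (m + n : ℤ) = q * (b * m + x⁻¹ * b * n) := by
    push_cast
    linear_combination (-(m + n * x⁻¹)) * hxdef - n * inv_mul_of_unit x hx
  rw [← AddChar.map_add_eq_mul, hsum, stdAddChar_natCast_mul]
  simp only [map_add, map_mul, map_intCast, map_natCast, castHom_inv _ hx]
  simp only [← hxdef, map_sub, map_mul, map_natCast, map_one]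
  congr 1
  ring

/-- `S(m,n;c)·e((m+n)/c) = ∑_{qr = c} V_q(m,n;r)`, the sum being over ordered pairs
of positive integers `(q,r)` with `qr = c`. -/
theorem kloosterman_eq_sum_Vsum (m n : ℤ) (c : ℕ) (hc : 0 < c) :
    kloosterman m n c * e (((m : ℝ) + (n : ℝ)) / c)
      = ∑ p ∈ c.divisorsAntidiagonal, Vsum (p.1 : ℤ) m n p.2 := by
  have : NeZero c := ⟨hc.ne'⟩
  rw [kloosterman_eq_sum_stdAddChar, ← Int.cast_add, e_intCast_div, sum_mul,
    sum_isUnit_eq_sum_divisorsAntidiagonal]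
  refine sum_congr rfl fun ⟨q, r⟩ hp => ?_
  obtain ⟨rfl, hqr⟩ := Nat.mem_divisorsAntidiagonal.1 hp
  have : NeZero q := ⟨left_ne_zero_of_mul hqr⟩
  have : NeZero r := ⟨right_ne_zero_of_mul hqr⟩
  rw [Vsum_eq_sum_stdAddChar, Int.cast_natCast]
  -- The two filters carry different `Decidable` instances: classical over `ZMod p.2`, and one
  -- through the finite unit group once `NeZero r` is known.
  refine sum_congr (filter_congr_decidable _ _ _) fun b hb => ?_
  exact stdAddChar_kloosterman_term_mul b m n
    ((isUnit_natCast_mul_sub_one_iff q r b).2 (mem_filter.1 hb).2.2)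
end

section
/- Fix ε ∈ (0,1/2) and a real A ≥ 0. There is a constant C = C(ε, A) such that for all T ≥ 2 and all M with T^ε ≤ M ≤ T^{1−ε}, one has |(1/π²) ∫_{−∞}^{∞} h(t)·tanh(πt)·t dt − (2/(π√π))·M·T| ≤ C · M·T · T^{−A}. -/
open MeasureTheory

/-- `β(r) = exp(-r²)`. -/
noncomputable def βfun (r : ℝ) : ℝ := Real.exp (-r ^ 2)

/-- `h(t) = β((t-T)/M) + β((t+T)/M)`. -/
noncomputable def hfun (T M t : ℝ) : ℝ := βfun ((t - T) / M) + βfun ((t + T) / M)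

/-! Both `h` and `t ↦ t tanh (πt)` are even, so the integral is twice
`∫ β((t-T)/M) tanh(πt) t dt`. With `tanh` replaced by `1` this is the Gaussian moment
`√π M T`, which produces the main term exactly. In the error
`∫ β((t-T)/M) (1 - tanh(πt)) t dt` the Gaussian factor is at most `exp(-(T/M)²/4)` left of
`T/2`, while `1 - tanh(πt) ≤ 2 exp(-πT)` right of it; as `T/M ≥ T^ε` both are
`O(exp(-T^{2ε}/8))`, which beats every power of `T`. -/

open Real

lemma Real.continuous_tanh : Continuous tanh := by
  simp only [funext tanh_eq_sinh_div_cosh]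
  exact continuous_sinh.div continuous_cosh fun x => (cosh_pos x).ne'

lemma Real.one_sub_tanh_le_two_mul_exp (x : ℝ) : 1 - tanh x ≤ 2 * exp (-(2 * x)) := by
  have hcosh : exp x / 2 ≤ cosh x := by
    rw [cosh_eq]; linarith [exp_pos (-x)]
  calc 1 - tanh x = exp (-x) / cosh x := by
        rw [tanh_eq_sinh_div_cosh, ← cosh_sub_sinh x]
        field_simp [(cosh_pos x).ne']
    _ ≤ exp (-x) / (exp x / 2) := by gcongr
    _ = 2 * exp (-(2 * x)) := by
        rw [show -(2 * x) = -x + -x by ring, exp_add, exp_neg x]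
        field_simp

lemma βfun_neg (r : ℝ) : βfun (-r) = βfun r := by
  simp [βfun]

lemma βfun_pos (r : ℝ) : 0 < βfun r := exp_pos _

lemma integrable_βfun : Integrable βfun := by
  show Integrable fun r => exp (-r ^ 2)
  simpa using integrable_exp_neg_mul_sq one_pos

lemma integrable_βfun_mul_self : Integrable fun r => βfun r * r := by
  simpa [βfun, mul_comm] using integrable_mul_exp_neg_mul_sq one_pos

lemma integral_βfun : ∫ r, βfun r = √π := by
  simpa [βfun] using integral_gaussian 1

lemma integral_βfun_mul_self : ∫ r, βfun r * r = 0 := by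
  have h := integral_neg_eq_self (fun r => βfun r * r) volume
  simp only [βfun_neg, mul_neg, integral_neg] at h
  linarith

lemma MeasureTheory.Integrable.comp_sub_div {E : Type*} [NormedAddCommGroup E] {f : ℝ → E}
    (hf : Integrable f) (S : ℝ) {M : ℝ} (hM : M ≠ 0) :
    Integrable fun t => f ((t - S) / M) :=
  (hf.comp_div hM).comp_sub_right S

lemma integral_comp_sub_div {E : Type*} [NormedAddCommGroup E] [NormedSpace ℝ E] (f : ℝ → E)
    (S : ℝ) {M : ℝ} (hM : 0 < M) :
    ∫ t, f ((t - S) / M) = M • ∫ r, f r := by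
  rw [integral_sub_right_eq_self (fun t => f (t / M)) S, Measure.integral_comp_div,
    abs_of_pos hM]

lemma βfun_sub_div_mul_eq (S t : ℝ) {M : ℝ} (hM : M ≠ 0) :
    βfun ((t - S) / M) * t =
      M * (βfun ((t - S) / M) * ((t - S) / M)) + S * βfun ((t - S) / M) := by
  field_simp
  ring

lemma integrable_βfun_sub_div_mul_self (S : ℝ) {M : ℝ} (hM : M ≠ 0) :
    Integrable fun t => βfun ((t - S) / M) * t := by
  simp only [βfun_sub_div_mul_eq S _ hM]
  exact ((integrable_βfun_mul_self.comp_sub_div S hM).const_mul M).add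
    ((integrable_βfun.comp_sub_div S hM).const_mul S)

lemma integral_βfun_sub_div (S : ℝ) {M : ℝ} (hM : 0 < M) :
    ∫ t, βfun ((t - S) / M) = M * √π := by
  rw [integral_comp_sub_div βfun S hM, integral_βfun, smul_eq_mul]

lemma integral_βfun_sub_div_mul_self (S : ℝ) {M : ℝ} (hM : 0 < M) :
    ∫ t, βfun ((t - S) / M) * t = M * √π * S := by
  simp only [βfun_sub_div_mul_eq S _ hM.ne']
  rw [integral_add ((integrable_βfun_mul_self.comp_sub_div S hM.ne').const_mul M)
      ((integrable_βfun.comp_sub_div S hM.ne').const_mul S), integral_const_mul,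
    integral_const_mul, integral_comp_sub_div (fun r => βfun r * r) S hM,
    integral_βfun_mul_self, integral_βfun_sub_div S hM, smul_zero]
  ring

lemma integrable_βfun_sub_div_mul_tanh_mul_self (S : ℝ) {M : ℝ} (hM : M ≠ 0) :
    Integrable fun t => βfun ((t - S) / M) * tanh (π * t) * t := by
  have htanh : ∀ t, ‖tanh (π * t)‖ ≤ 1 := fun t => (abs_tanh_lt_one _).le
  refine ((integrable_βfun_sub_div_mul_self S hM).bdd_mul
    (continuous_tanh.comp (continuous_const_mul π)).aestronglyMeasurable
    (Filter.Eventually.of_forall htanh)).congr (Filter.Eventually.of_forall fun t => ?_)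
  simp only [Function.comp_apply]
  ring

lemma integral_hfun_mul_tanh_mul_self (T : ℝ) {M : ℝ} (hM : M ≠ 0) :
    ∫ t, hfun T M t * tanh (π * t) * t = 2 * ∫ t, βfun ((t - T) / M) * tanh (π * t) * t := by
  have hreflect : ∫ t, βfun ((t + T) / M) * tanh (π * t) * t =
      ∫ t, βfun ((t - T) / M) * tanh (π * t) * t := by
    rw [← integral_neg_eq_self]
    congr 1 with t
    rw [show (-t + T) / M = -((t - T) / M) by ring, βfun_neg]
    simp only [mul_neg, tanh_neg]
    ring
  have hint₂ := integrable_βfun_sub_div_mul_tanh_mul_self (-T) hM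
  simp only [sub_neg_eq_add] at hint₂
  simp only [hfun, add_mul]
  rw [integral_add (integrable_βfun_sub_div_mul_tanh_mul_self T hM) hint₂, hreflect]
  ring

lemma integral_βfun_sub_div_mul_tanh_mul_self (T : ℝ) {M : ℝ} (hM : 0 < M) :
    ∫ t, βfun ((t - T) / M) * tanh (π * t) * t =
      M * √π * T - ∫ t, βfun ((t - T) / M) * (1 - tanh (π * t)) * t := by
  have hsplit : ∫ t, βfun ((t - T) / M) * (1 - tanh (π * t)) * t =
      (∫ t, βfun ((t - T) / M) * t) - ∫ t, βfun ((t - T) / M) * tanh (π * t) * t := by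
    rw [← integral_sub (integrable_βfun_sub_div_mul_self T hM.ne')
      (integrable_βfun_sub_div_mul_tanh_mul_self T hM.ne')]
    congr 1 with t
    ring
  rw [hsplit, integral_βfun_sub_div_mul_self T hM]
  ring

lemma weight_integral_sub_main_term (T : ℝ) {M : ℝ} (hM : 0 < M) :
    1 / π ^ 2 * (∫ t, hfun T M t * tanh (π * t) * t) - 2 / (π * √π) * M * T =
      -(2 / π ^ 2) * ∫ t, βfun ((t - T) / M) * (1 - tanh (π * t)) * t := by
  rw [integral_hfun_mul_tanh_mul_self T hM.ne', integral_βfun_sub_div_mul_tanh_mul_self T hM]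
  have hsqrt : √π ^ 2 = π := sq_sqrt pi_pos.le
  have hsqrt0 : 0 < √π := sqrt_pos.2 pi_pos
  field_simp
  linear_combination (M * T) * hsqrt

lemma abs_le_two_mul_exp_sq_div_four (u : ℝ) : |u| ≤ 2 * exp (u ^ 2 / 4) := by
  nlinarith [add_one_le_exp (u ^ 2 / 4), sq_nonneg (|u| - 2), sq_abs u]

lemma abs_mul_exp_neg_sq_div_four_le {T M : ℝ} (hM : 0 < M) (hT : 0 ≤ T) (t : ℝ) :
    |t| * exp (-((t - T) / M) ^ 2 / 4) ≤ 2 * M + T := by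
  set u := (t - T) / M
  have ht : |t| ≤ M * |u| + T := by
    calc |t| = |M * u + T| := by simp only [u]; field_simp; ring_nf
      _ ≤ |M * u| + |T| := abs_add_le _ _
      _ = M * |u| + T := by rw [abs_mul, abs_of_pos hM, abs_of_nonneg hT]
  have hu : |u| * exp (-u ^ 2 / 4) ≤ 2 := by
    have := abs_le_two_mul_exp_sq_div_four u
    rw [neg_div, exp_neg, ← div_eq_mul_inv, div_le_iff₀ (exp_pos _)]
    exact this
  have hexp : exp (-u ^ 2 / 4) ≤ 1 := exp_le_one_iff.2 (by nlinarith [sq_nonneg u])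
  calc |t| * exp (-u ^ 2 / 4) ≤ (M * |u| + T) * exp (-u ^ 2 / 4) := by gcongr
    _ = M * (|u| * exp (-u ^ 2 / 4)) + T * exp (-u ^ 2 / 4) := by ring
    _ ≤ M * 2 + T * 1 := by gcongr
    _ = 2 * M + T := by ring

lemma exp_mul_one_sub_tanh_le {T M a : ℝ} (hM : 0 < M) (hT : 0 ≤ T)
    (ha₁ : a ≤ (T / M) ^ 2 / 8) (ha₂ : a ≤ π * T) (t : ℝ) :
    exp (-((t - T) / M) ^ 2 / 2) * (1 - tanh (π * t)) ≤ 2 * exp (-a) := by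
  have htanh : 0 ≤ 1 - tanh (π * t) := by linarith [tanh_lt_one (π * t)]
  rcases le_or_gt t (T / 2) with ht | ht
  · -- `t` is at distance `≥ T/2` from the centre of the Gaussian
    have hu : (T / M) ^ 2 / 4 ≤ ((t - T) / M) ^ 2 := by
      rw [div_pow, div_pow, div_div, le_div_iff₀ (by positivity)]
      field_simp
      nlinarith [mul_le_mul ht ht]
    calc exp (-((t - T) / M) ^ 2 / 2) * (1 - tanh (π * t)) ≤ exp (-a) * 2 := by
          gcongr
          · linarith
          · linarith [neg_one_lt_tanh (π * t)]
      _ = 2 * exp (-a) := mul_comm _ _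
  · -- `1 - tanh (πt) ≤ 2 exp(-2πt) ≤ 2 exp(-πT)`
    calc exp (-((t - T) / M) ^ 2 / 2) * (1 - tanh (π * t))
        ≤ 1 * (2 * exp (-(2 * (π * t)))) := by
          gcongr
          · exact exp_le_one_iff.2 (by nlinarith [sq_nonneg ((t - T) / M)])
          · exact one_sub_tanh_le_two_mul_exp _
      _ ≤ 2 * exp (-a) := by
          rw [one_mul]
          gcongr
          nlinarith [pi_pos]

lemma abs_βfun_mul_one_sub_tanh_mul_le {T M a : ℝ} (hM : 0 < M) (hT : 0 ≤ T)
    (ha₁ : a ≤ (T / M) ^ 2 / 8) (ha₂ : a ≤ π * T) (t : ℝ) :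
    |βfun ((t - T) / M) * (1 - tanh (π * t)) * t| ≤
      2 * exp (-a) * (2 * M + T) * βfun ((t - T) / (2 * M)) := by
  set u := (t - T) / M
  have hsplit : βfun u = exp (-u ^ 2 / 2) * exp (-u ^ 2 / 4) * βfun ((t - T) / (2 * M)) := by
    simp only [βfun, ← exp_add, u]
    congr 1
    field_simp
    ring
  have htanh : 0 ≤ 1 - tanh (π * t) := by linarith [tanh_lt_one (π * t)]
  rw [abs_mul, abs_mul, abs_of_pos (βfun_pos u), abs_of_nonneg htanh, hsplit]
  calc exp (-u ^ 2 / 2) * exp (-u ^ 2 / 4) * βfun ((t - T) / (2 * M)) * (1 - tanh (π * t)) * |t|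
      = (exp (-u ^ 2 / 2) * (1 - tanh (π * t))) * (|t| * exp (-u ^ 2 / 4)) *
          βfun ((t - T) / (2 * M)) := by ring
    _ ≤ 2 * exp (-a) * (2 * M + T) * βfun ((t - T) / (2 * M)) := by
        have := βfun_pos ((t - T) / (2 * M))
        gcongr ?_ * ?_ * _
        · exact exp_mul_one_sub_tanh_le hM hT ha₁ ha₂ t
        · exact abs_mul_exp_neg_sq_div_four_le hM hT t

lemma abs_integral_βfun_mul_one_sub_tanh_mul_le {T M a : ℝ} (hM : 0 < M) (hT : 0 ≤ T)
    (ha₁ : a ≤ (T / M) ^ 2 / 8) (ha₂ : a ≤ π * T) :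
    |∫ t, βfun ((t - T) / M) * (1 - tanh (π * t)) * t| ≤
      4 * √π * exp (-a) * M * (2 * M + T) := by
  have hM2 : (0 : ℝ) < 2 * M := by positivity
  calc |∫ t, βfun ((t - T) / M) * (1 - tanh (π * t)) * t|
      ≤ ∫ t, 2 * exp (-a) * (2 * M + T) * βfun ((t - T) / (2 * M)) := by
        rw [← Real.norm_eq_abs]
        exact norm_integral_le_of_norm_le ((integrable_βfun.comp_sub_div T hM2.ne').const_mul _)
          (Filter.Eventually.of_forall (abs_βfun_mul_one_sub_tanh_mul_le hM hT ha₁ ha₂))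
    _ = 4 * √π * exp (-a) * M * (2 * M + T) := by
        rw [integral_const_mul, integral_βfun_sub_div T hM2]
        ring

lemma exists_exp_neg_mul_rpow_le {κ b : ℝ} (hκ : 0 < κ) (hb : 0 < b) (A : ℝ) :
    ∃ C, ∀ T, 1 ≤ T → exp (-(κ * T ^ b)) ≤ C * T ^ (-A) := by
  -- `exp y ≥ y ^ n / n!` with `n` large enough that `(T ^ b) ^ n` dominates `T ^ A`
  set n := ⌈A / b⌉₊
  refine ⟨n.factorial / κ ^ n, fun T hT => ?_⟩
  have hT0 : 0 < T := by linarith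
  have hpow : T ^ A ≤ (T ^ b) ^ n := by
    rw [← rpow_natCast, ← rpow_mul hT0.le]
    refine rpow_le_rpow_of_exponent_le hT ?_
    have := Nat.le_ceil (A / b)
    rwa [div_le_iff₀ hb, mul_comm] at this
  have hexp := pow_div_factorial_le_exp (κ * T ^ b) (by positivity) n
  rw [rpow_neg hT0.le, exp_neg]
  calc (exp (κ * T ^ b))⁻¹ ≤ ((κ * T ^ b) ^ n / n.factorial)⁻¹ :=
        inv_anti₀ (by positivity) hexp
    _ = n.factorial / κ ^ n * ((T ^ b) ^ n)⁻¹ := by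
        rw [mul_pow]
        field_simp
    _ ≤ n.factorial / κ ^ n * (T ^ A)⁻¹ := by gcongr

lemma abs_weight_integral_sub_main_term_le {T M a : ℝ} (hM : 0 < M) (hMT : M ≤ T)
    (ha₁ : a ≤ (T / M) ^ 2 / 8) (ha₂ : a ≤ π * T) :
    |1 / π ^ 2 * (∫ t, hfun T M t * tanh (π * t) * t) - 2 / (π * √π) * M * T| ≤
      24 * √π / π ^ 2 * exp (-a) * (M * T) := by
  rw [weight_integral_sub_main_term T hM, abs_mul, abs_neg, abs_of_pos (by positivity)]
  calc 2 / π ^ 2 * |∫ t, βfun ((t - T) / M) * (1 - tanh (π * t)) * t|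
      ≤ 2 / π ^ 2 * (4 * √π * exp (-a) * M * (2 * M + T)) := by
        gcongr
        exact abs_integral_βfun_mul_one_sub_tanh_mul_le hM (hM.le.trans hMT) ha₁ ha₂
    _ ≤ 2 / π ^ 2 * (4 * √π * exp (-a) * M * (3 * T)) := by
        gcongr
        linarith
    _ = 24 * √π / π ^ 2 * exp (-a) * (M * T) := by ring

lemma rpow_two_mul_le_div_sq {ε T M : ℝ} (hT : 0 < T) (hM : 0 < M) (hMT : M ≤ T ^ (1 - ε)) :
    T ^ (2 * ε) ≤ (T / M) ^ 2 := by
  have hTM : T ^ ε ≤ T / M := by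
    rw [le_div_iff₀ hM]
    calc T ^ ε * M ≤ T ^ ε * T ^ (1 - ε) := by gcongr
      _ = T := by rw [← rpow_add hT]; simp
  rw [mul_comm 2 ε, rpow_mul hT.le, rpow_two]
  gcongr

theorem diagonal_weight_asymptotic_general (ε : ℝ) (hε : ε ∈ Set.Ioo (0 : ℝ) (1 / 2))
    (A : ℝ) :
    ∃ C : ℝ, ∀ T M : ℝ, 2 ≤ T → T ^ ε ≤ M → M ≤ T ^ (1 - ε) →
      |(1 / Real.pi ^ 2) * (∫ t : ℝ, hfun T M t * Real.tanh (Real.pi * t) * t)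
        - (2 / (Real.pi * Real.sqrt Real.pi)) * M * T|
        ≤ C * (M * T) * T ^ (-A) := by
  obtain ⟨hε₀, hε₁⟩ := hε
  obtain ⟨C₀, hC₀⟩ := exists_exp_neg_mul_rpow_le (κ := 1 / 8) (b := 2 * ε) (by norm_num)
    (by linarith) A
  refine ⟨24 * √π / π ^ 2 * C₀, fun T M hT hM₁ hM₂ => ?_⟩
  have hT₁ : 1 ≤ T := by linarith
  have hT₀ : 0 < T := by linarith
  have hM₀ : 0 < M := (rpow_pos_of_pos hT₀ ε).trans_le hM₁
  have hMT : M ≤ T :=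
    hM₂.trans (by simpa using rpow_le_rpow_of_exponent_le hT₁ (by linarith : 1 - ε ≤ 1))
  have ha₁ : 1 / 8 * T ^ (2 * ε) ≤ (T / M) ^ 2 / 8 := by
    linarith [rpow_two_mul_le_div_sq hT₀ hM₀ hM₂]
  have ha₂ : 1 / 8 * T ^ (2 * ε) ≤ π * T := by
    have := rpow_le_rpow_of_exponent_le hT₁ (by linarith : 2 * ε ≤ 1)
    rw [rpow_one] at this
    nlinarith [pi_gt_three]
  calc _ ≤ 24 * √π / π ^ 2 * exp (-(1 / 8 * T ^ (2 * ε))) * (M * T) :=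
        abs_weight_integral_sub_main_term_le hM₀ hMT ha₁ ha₂
    _ ≤ 24 * √π / π ^ 2 * (C₀ * T ^ (-A)) * (M * T) := by gcongr; exact hC₀ T hT₁
    _ = 24 * √π / π ^ 2 * C₀ * (M * T) * T ^ (-A) := by ring

/-- For `T^ε ≤ M ≤ T^{1-ε}`,
`(1/π²) ∫_ℝ h(t) tanh(πt) t dt = (2/(π√π)) M T (1 + O_A(T^{-A}))`. -/
theorem diagonal_weight_asymptotic (ε : ℝ) (hε : ε ∈ Set.Ioo (0 : ℝ) (1 / 2))
    (A : ℝ) (hA : 0 ≤ A) :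
    ∃ C : ℝ, ∀ T M : ℝ, 2 ≤ T → T ^ ε ≤ M → M ≤ T ^ (1 - ε) →
      |(1 / Real.pi ^ 2) * (∫ t : ℝ, hfun T M t * Real.tanh (Real.pi * t) * t)
        - (2 / (Real.pi * Real.sqrt Real.pi)) * M * T|
        ≤ C * (M * T) * T ^ (-A) :=
  diagonal_weight_asymptotic_general ε hε A
end

section
/- Let c and n₁ be positive integers, let d be a positive divisor of c·n₁, and set h = c·n₁/d and c′ = c/gcd(c,d). Then for all integers m and n: Σ_{α=0}^{c−1} S(m, α·n₁; h) · S(n, α·n₁; h) = c · Σ_{β,γ mod h, gcd(β,h)=gcd(γ,h)=1, β ≡ γ (mod c′)} e((β* m − γ* n)/h), where β*, γ* denote the multiplicative inverses of β, γ modulo h. -/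
open scoped Classical

noncomputable def E (h : ℕ) (t : ℤ) : ℂ := e (t / h)

lemma e_add (x y : ℝ) : e (x + y) = e x * e y := by
  simp [e, mul_add, Complex.exp_add]

lemma e_int (k : ℤ) : e k = 1 := by
  have := Complex.exp_int_mul_two_pi_mul_I k
  rw [e]
  rw [show ((2:ℂ) * Real.pi * Complex.I * ((k:ℝ):ℂ)) = (k:ℂ) * (2 * Real.pi * Complex.I) by push_cast; ring]
  exact this

lemma E_add (h : ℕ) (s t : ℤ) : E h (s + t) = E h s * E h t := by
  rw [E, E, E, ← e_add]
  congr 1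
  push_cast
  ring

lemma E_zero (h : ℕ) : E h 0 = 1 := by
  have := e_int 0
  simp only [Int.cast_zero] at this
  simpa [E] using this

lemma E_nat_mul (h : ℕ) (k : ℕ) (t : ℤ) : E h (k * t) = E h t ^ k := by
  induction k with
  | zero => simpa using E_zero h
  | succ k ih =>
      rw [show ((k+1 : ℕ) : ℤ) * t = k * t + t by push_cast; ring, E_add, ih, pow_succ]

lemma E_of_dvd (h : ℕ) (hh : 0 < h) {t : ℤ} (ht : (h:ℤ) ∣ t) : E h t = 1 := by
  obtain ⟨k, rfl⟩ := ht
  rw [E, show (((h:ℤ) * k : ℤ) : ℝ) / h = (k : ℝ) by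
    push_cast; field_simp]
  exact e_int k

lemma E_eq_one_iff (h : ℕ) (hh : 0 < h) (t : ℤ) : E h t = 1 ↔ (h:ℤ) ∣ t := by
  constructor
  · intro he
    rw [E, e, Complex.exp_eq_one_iff] at he
    obtain ⟨k, hk⟩ := he
    have h2 : (2 * (Real.pi:ℂ) * Complex.I) ≠ 0 := by
      simp [Real.pi_ne_zero, Complex.I_ne_zero]
    have hx : (((t:ℝ)/h : ℝ) : ℂ) = (k:ℂ) := by
      have : (2 * (Real.pi:ℂ) * Complex.I) * (((t:ℝ)/h : ℝ) : ℂ)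
          = (2 * (Real.pi:ℂ) * Complex.I) * (k:ℂ) := by
        rw [hk]; ring
      exact mul_left_cancel₀ h2 this
    have hx' : (t:ℝ)/h = (k:ℝ) := by exact_mod_cast hx
    have hh' : (h:ℝ) ≠ 0 := by positivity
    have : (t:ℝ) = (k:ℝ) * h := by field_simp at hx'; linarith
    refine ⟨k, ?_⟩
    have : (t:ℝ) = ((h * k : ℤ) : ℝ) := by push_cast; linarith
    exact_mod_cast this
  · exact E_of_dvd h hh


lemma E_congr (h : ℕ) (hh : 0 < h) {s t : ℤ} (hst : (s : ZMod h) = (t : ZMod h)) :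
    E h s = E h t := by
  rw [ZMod.intCast_eq_intCast_iff, Int.ModEq] at hst
  have : (h:ℤ) ∣ s - t := Int.ModEq.dvd (Int.ModEq.symm hst)
  obtain ⟨k, hk⟩ := this
  have : s = t + h * k := by linarith
  rw [this, E_add, E_of_dvd h hh ⟨k, rfl⟩, mul_one]

lemma sum_geom (c h : ℕ) (hh : 0 < h) (t : ℤ) (hch : (h:ℤ) ∣ (c:ℤ) * t) :
    ∑ α ∈ Finset.range c, E h ((α:ℤ) * t) = if (h:ℤ) ∣ t then (c:ℂ) else 0 := by
  by_cases hdvd : (h:ℤ) ∣ t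
  · simp only [if_pos hdvd]
    have : ∀ α ∈ Finset.range c, E h ((α:ℤ) * t) = 1 := by
      intro α _
      exact E_of_dvd h hh (Dvd.dvd.mul_left hdvd _)
    rw [Finset.sum_congr rfl this]
    simp
  · simp only [if_neg hdvd]
    have hne : E h t ≠ 1 := fun hone => hdvd ((E_eq_one_iff h hh t).mp hone)
    have hterm : ∀ α : ℕ, E h ((α:ℤ) * t) = (E h t) ^ α := fun α => E_nat_mul h α t
    rw [Finset.sum_congr rfl (fun α _ => hterm α), geom_sum_eq hne]
    have : (E h t) ^ c = 1 := by
      rw [← E_nat_mul]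
      exact E_of_dvd h hh hch
    rw [this]
    simp

lemma sum_range_units (h : ℕ) [NeZero h] (f : ZMod h → ℂ) :
    ∑ α ∈ Finset.range h, (if IsUnit ((α:ℕ) : ZMod h) then f ((α:ℕ) : ZMod h) else 0)
      = ∑ u : (ZMod h)ˣ, f (u : ZMod h) := by
  rw [← Finset.sum_filter]
  refine Finset.sum_bij' (fun α hα => (Finset.mem_filter.mp hα).2.unit)
    (fun u _ => (u : ZMod h).val) ?_ ?_ ?_ ?_ ?_
  · intros; exact Finset.mem_univ _
  · intro u _
    refine Finset.mem_filter.mpr ⟨Finset.mem_range.mpr (ZMod.val_lt _), ?_⟩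
    rw [ZMod.natCast_val, ZMod.cast_id]
    exact u.isUnit
  · intro α hα
    have hlt := Finset.mem_range.mp (Finset.mem_filter.mp hα).1
    simp only [IsUnit.unit_spec]
    rw [ZMod.val_cast_of_lt hlt]
  · intro u _
    apply Units.ext
    rw [IsUnit.unit_spec, ZMod.natCast_val, ZMod.cast_id]
  · intro α hα
    rw [IsUnit.unit_spec]

lemma key_arith (c n₁ d : ℕ) (hc : 0 < c) (hn₁ : 0 < n₁) (hd : 0 < d) (hdvd : d ∣ c * n₁) :
    0 < c * n₁ / d ∧ (c / Nat.gcd c d) ∣ (c * n₁ / d) ∧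
      ∀ s : ℤ, ((c * n₁ / d : ℕ) : ℤ) ∣ s * n₁ ↔ ((c / Nat.gcd c d : ℕ) : ℤ) ∣ s := by
  set g := Nat.gcd c d with hgdef
  have hg : 0 < g := Nat.gcd_pos_of_pos_left d hc
  set c' := c / g with hc'def
  set d' := d / g with hd'def
  have hcg : c' * g = c := Nat.div_mul_cancel (Nat.gcd_dvd_left c d)
  have hdg : d' * g = d := Nat.div_mul_cancel (Nat.gcd_dvd_right c d)
  have hcop : Nat.Coprime c' d' := Nat.coprime_div_gcd_div_gcd hg
  set h := c * n₁ / d with hhdef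
  have hhd : h * d = c * n₁ := Nat.div_mul_cancel hdvd
  have hd' : 0 < d' := Nat.div_pos (Nat.le_of_dvd hd (Nat.gcd_dvd_right c d)) hg
  have hc' : 0 < c' := Nat.div_pos (Nat.le_of_dvd hc (Nat.gcd_dvd_left c d)) hg
  -- h * d' = c' * n₁
  have h1 : h * d' * g = c' * n₁ * g := by
    calc h * d' * g = h * (d' * g) := by ring
    _ = c * n₁ := by rw [hdg, hhd]
    _ = c' * g * n₁ := by rw [hcg]
    _ = c' * n₁ * g := by ring
  have h2 : h * d' = c' * n₁ := Nat.eq_of_mul_eq_mul_right hg h1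
  have hd'n : d' ∣ n₁ := by
    have : d' ∣ c' * n₁ := ⟨h, by rw [← h2]; ring⟩
    exact (Nat.Coprime.dvd_of_dvd_mul_left (Nat.coprime_comm.mp hcop) this)
  set n'' := n₁ / d' with hn''def
  have hn'' : n'' * d' = n₁ := Nat.div_mul_cancel hd'n
  have h3 : h = c' * n'' := by
    have : h * d' = c' * n'' * d' := by rw [h2, ← hn'']; ring
    exact Nat.eq_of_mul_eq_mul_right hd' this
  have hn''pos : 0 < n'' := by
    rcases Nat.eq_zero_or_pos n'' with h0 | h0
    · exfalso; rw [h0, zero_mul] at hn''; omega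
    · exact h0
  refine ⟨by rw [h3]; positivity, ⟨n'', h3⟩, ?_⟩
  intro s
  have hcast_h : (h : ℤ) = (c' : ℤ) * (n'' : ℤ) := by exact_mod_cast h3
  have hcast_n : (n₁ : ℤ) = (n'' : ℤ) * (d' : ℤ) := by exact_mod_cast hn''.symm
  have hn''ne : (n'' : ℤ) ≠ 0 := by exact_mod_cast hn''pos.ne'
  rw [hcast_h, hcast_n]
  constructor
  · intro hdd
    have : (c':ℤ) * n'' ∣ (s * d') * n'' := by
      rw [show (s * d') * (n'':ℤ) = s * (n'' * d') by ring] at *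
      exact hdd
    have hsd : (c':ℤ) ∣ s * d' := (mul_dvd_mul_iff_right hn''ne).mp this
    have hcopZ : Int.gcd (c' : ℤ) (d' : ℤ) = 1 := by
      rw [Int.gcd_natCast_natCast]; exact hcop
    rw [mul_comm] at hsd
    exact Int.dvd_of_dvd_mul_right_of_gcd_one hsd hcopZ
  · intro hdd
    obtain ⟨k, rfl⟩ := hdd
    exact ⟨k * d', by ring⟩


lemma kloosterman_eq (m n : ℤ) (h : ℕ) [NeZero h] :
    kloosterman m n h
      = ∑ u : (ZMod h)ˣ,
          E h ((((u : ZMod h)).val : ℤ) * m + ((((u : ZMod h))⁻¹).val : ℤ) * n) := by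
  rw [kloosterman, ← sum_range_units h (fun x => E h (((x.val : ℤ)) * m + (((x⁻¹).val : ℤ)) * n))]
  refine Finset.sum_congr rfl ?_
  intro α hα
  have hlt : α < h := Finset.mem_range.mp hα
  by_cases hu : IsUnit ((α : ℕ) : ZMod h)
  · rw [if_pos hu, if_pos hu]
    rw [E, ZMod.val_cast_of_lt hlt]
    congr 1
    push_cast
    ring
  · rw [if_neg hu, if_neg hu]


set_option maxHeartbeats 1000000 in
/-- For `d ∣ c n₁` with `h = c n₁ / d` and `c' = c / gcd(c,d)`:
`∑_{α=0}^{c-1} S(m, α n₁; h) S(n, α n₁; h)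
  = c ∑∑_{β,γ mod h, (βγ,h)=1, β ≡ γ (mod c')} e((β* m - γ* n)/h)`. -/
theorem kloosterman_orthogonality (c n₁ d : ℕ) (hc : 0 < c) (hn₁ : 0 < n₁) (hd : 0 < d)
    (hdvd : d ∣ c * n₁) (m n : ℤ) :
    ∑ α ∈ Finset.range c,
        kloosterman m ((α : ℤ) * n₁) (c * n₁ / d) * kloosterman n ((α : ℤ) * n₁) (c * n₁ / d)
      = (c : ℂ) *
        ∑ β ∈ Finset.range (c * n₁ / d), ∑ γ ∈ Finset.range (c * n₁ / d),
          if IsUnit (β : ZMod (c * n₁ / d)) ∧ IsUnit (γ : ZMod (c * n₁ / d))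
              ∧ ((β : ZMod (c / Nat.gcd c d)) = (γ : ZMod (c / Nat.gcd c d))) then
            e (((((β : ZMod (c * n₁ / d))⁻¹).val : ℝ) * (m : ℝ)
                - (((γ : ZMod (c * n₁ / d))⁻¹).val : ℝ) * (n : ℝ)) / (c * n₁ / d : ℕ))
          else 0 := by
  obtain ⟨hh, hc'h, hiff⟩ := key_arith c n₁ d hc hn₁ hd hdvd
  set h := c * n₁ / d with hhdef
  set c' := c / Nat.gcd c d with hc'def
  have hhd : h * d = c * n₁ := Nat.div_mul_cancel hdvd
  set F : ZMod h →+* ZMod c' := ZMod.castHom hc'h (ZMod c') with hFdef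
  haveI : NeZero h := ⟨hh.ne'⟩
  -- Step 2: RHS in units form
  have rhs_eq :
      (∑ β ∈ Finset.range h, ∑ γ ∈ Finset.range h,
          if IsUnit (β : ZMod h) ∧ IsUnit (γ : ZMod h)
              ∧ ((β : ZMod c') = (γ : ZMod c')) then
            e (((((β : ZMod h)⁻¹).val : ℝ) * (m : ℝ)
                - (((γ : ZMod h)⁻¹).val : ℝ) * (n : ℝ)) / (h : ℕ))
          else 0)
        = ∑ b : (ZMod h)ˣ, ∑ g : (ZMod h)ˣ,
            (if F (b : ZMod h) = F (g : ZMod h) then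
              E h ((((b : ZMod h))⁻¹.val : ℤ) * m - (((g : ZMod h))⁻¹.val : ℤ) * n) else 0) := by
    have hterm : ∀ β γ : ℕ,
        (if IsUnit (β : ZMod h) ∧ IsUnit (γ : ZMod h)
              ∧ ((β : ZMod c') = (γ : ZMod c')) then
            e (((((β : ZMod h)⁻¹).val : ℝ) * (m : ℝ)
                - (((γ : ZMod h)⁻¹).val : ℝ) * (n : ℝ)) / (h : ℕ))
          else 0)
        = (if IsUnit ((γ:ℕ) : ZMod h) then
            (if IsUnit ((β:ℕ) : ZMod h) ∧ F ((β:ℕ) : ZMod h) = F ((γ:ℕ) : ZMod h) then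
              E h ((((β : ZMod h))⁻¹.val : ℤ) * m - (((γ : ZMod h))⁻¹.val : ℤ) * n) else 0)
            else 0) := by
      intro β γ
      have hC : ((β : ZMod c') = (γ : ZMod c'))
          ↔ F ((β:ℕ) : ZMod h) = F ((γ:ℕ) : ZMod h) := by
        rw [map_natCast, map_natCast]
      have hE : e (((((β : ZMod h)⁻¹).val : ℝ) * (m : ℝ)
                - (((γ : ZMod h)⁻¹).val : ℝ) * (n : ℝ)) / (h : ℕ))
          = E h ((((β : ZMod h))⁻¹.val : ℤ) * m - (((γ : ZMod h))⁻¹.val : ℤ) * n) := by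
        rw [E]; congr 1; push_cast; ring
      simp only [hC, hE]
      split_ifs <;> first | rfl | tauto
    calc (∑ β ∈ Finset.range h, ∑ γ ∈ Finset.range h,
          if IsUnit (β : ZMod h) ∧ IsUnit (γ : ZMod h)
              ∧ ((β : ZMod c') = (γ : ZMod c')) then
            e (((((β : ZMod h)⁻¹).val : ℝ) * (m : ℝ)
                - (((γ : ZMod h)⁻¹).val : ℝ) * (n : ℝ)) / (h : ℕ))
          else 0)
        = ∑ β ∈ Finset.range h, ∑ g : (ZMod h)ˣ,
            (if IsUnit ((β:ℕ) : ZMod h) ∧ F ((β:ℕ) : ZMod h) = F ((g : ZMod h)) then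
              E h ((((β : ZMod h))⁻¹.val : ℤ) * m - (((g : ZMod h))⁻¹.val : ℤ) * n) else 0) := by
          refine Finset.sum_congr rfl fun β _ => ?_
          rw [Finset.sum_congr rfl fun γ _ => hterm β γ]
          exact sum_range_units h (fun y =>
            if IsUnit ((β:ℕ) : ZMod h) ∧ F ((β:ℕ) : ZMod h) = F y then
              E h ((((β : ZMod h))⁻¹.val : ℤ) * m - ((y⁻¹.val : ℕ) : ℤ) * n) else 0)
      _ = ∑ g : (ZMod h)ˣ, ∑ β ∈ Finset.range h,
            (if IsUnit ((β:ℕ) : ZMod h) ∧ F ((β:ℕ) : ZMod h) = F ((g : ZMod h)) then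
              E h ((((β : ZMod h))⁻¹.val : ℤ) * m - (((g : ZMod h))⁻¹.val : ℤ) * n) else 0) :=
          Finset.sum_comm
      _ = ∑ g : (ZMod h)ˣ, ∑ b : (ZMod h)ˣ,
            (if F ((b : ZMod h)) = F ((g : ZMod h)) then
              E h ((((b : ZMod h))⁻¹.val : ℤ) * m - (((g : ZMod h))⁻¹.val : ℤ) * n) else 0) := by
          refine Finset.sum_congr rfl fun g _ => ?_
          rw [Finset.sum_congr rfl fun β _ => (by split_ifs <;> first | rfl | tauto :
            (if IsUnit ((β:ℕ) : ZMod h) ∧ F ((β:ℕ) : ZMod h) = F ((g : ZMod h)) then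
              E h ((((β : ZMod h))⁻¹.val : ℤ) * m - (((g : ZMod h))⁻¹.val : ℤ) * n) else 0)
            = (if IsUnit ((β:ℕ) : ZMod h) then
                (if F ((β:ℕ) : ZMod h) = F ((g : ZMod h)) then
                  E h ((((β : ZMod h))⁻¹.val : ℤ) * m - (((g : ZMod h))⁻¹.val : ℤ) * n) else 0)
                else 0))]
          exact sum_range_units h (fun x =>
            if F x = F ((g : ZMod h)) then
              E h (((x⁻¹.val : ℕ) : ℤ) * m - (((g : ZMod h))⁻¹.val : ℤ) * n) else 0)
      _ = ∑ b : (ZMod h)ˣ, ∑ g : (ZMod h)ˣ,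
            (if F ((b : ZMod h)) = F ((g : ZMod h)) then
              E h ((((b : ZMod h))⁻¹.val : ℤ) * m - (((g : ZMod h))⁻¹.val : ℤ) * n) else 0) :=
          Finset.sum_comm
  haveI : NeZero h := ⟨hh.ne'⟩
  -- Step 1: LHS in units form with the orthogonality condition
  have lhs_eq :
      ∑ α ∈ Finset.range c, kloosterman m ((α : ℤ) * n₁) h * kloosterman n ((α : ℤ) * n₁) h
        = (c : ℂ) * ∑ u : (ZMod h)ˣ, ∑ v : (ZMod h)ˣ,
            (if ((c' : ℕ) : ℤ) ∣ ((((u : ZMod h))⁻¹.val : ℤ) + (((v : ZMod h))⁻¹.val : ℤ)) then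
              E h ((((u : ZMod h)).val : ℤ) * m + (((v : ZMod h)).val : ℤ) * n) else 0) := by
    have hK : ∀ α : ℕ,
        kloosterman m ((α:ℤ) * n₁) h * kloosterman n ((α:ℤ) * n₁) h
          = ∑ u : (ZMod h)ˣ, ∑ v : (ZMod h)ˣ,
              E h (((((u : ZMod h)).val : ℤ) * m + (((v : ZMod h)).val : ℤ) * n)
                + (α:ℤ) * (((((u : ZMod h))⁻¹.val : ℤ) + (((v : ZMod h))⁻¹.val : ℤ)) * (n₁:ℤ))) := by
      intro α
      rw [kloosterman_eq, kloosterman_eq, Finset.sum_mul_sum]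
      refine Finset.sum_congr rfl fun u _ => Finset.sum_congr rfl fun v _ => ?_
      rw [← E_add]
      congr 1
      ring
    rw [Finset.sum_congr rfl fun α _ => hK α, Finset.sum_comm]
    refine Eq.trans (Finset.sum_congr rfl fun u _ => Finset.sum_comm) ?_
    rw [Finset.mul_sum]
    refine Finset.sum_congr rfl fun u _ => ?_
    rw [Finset.mul_sum]
    refine Finset.sum_congr rfl fun v _ => ?_
    set A : ℤ := (((u : ZMod h)).val : ℤ) * m + (((v : ZMod h)).val : ℤ) * n with hA
    set sS : ℤ := (((u : ZMod h))⁻¹.val : ℤ) + (((v : ZMod h))⁻¹.val : ℤ) with hsS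
    have hcast : ((h:ℕ):ℤ) * (d:ℤ) = (c:ℤ) * (n₁:ℤ) := by exact_mod_cast hhd
    have hB : ((h:ℕ):ℤ) ∣ (c:ℤ) * (sS * (n₁:ℤ)) := by
      refine ⟨sS * (d:ℤ), ?_⟩
      linear_combination (-sS) * hcast
    calc ∑ α ∈ Finset.range c, E h (A + (α:ℤ) * (sS * (n₁:ℤ)))
        = ∑ α ∈ Finset.range c, E h A * E h ((α:ℤ) * (sS * (n₁:ℤ))) :=
          Finset.sum_congr rfl fun α _ => E_add h _ _
      _ = E h A * ∑ α ∈ Finset.range c, E h ((α:ℤ) * (sS * (n₁:ℤ))) :=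
          (Finset.mul_sum _ _ _).symm
      _ = E h A * (if ((h:ℕ):ℤ) ∣ (sS * (n₁:ℤ)) then (c:ℂ) else 0) := by
          rw [sum_geom c h hh _ hB]
      _ = E h A * (if ((c':ℕ):ℤ) ∣ sS then (c:ℂ) else 0) := by
          rw [if_congr (hiff sS) rfl rfl]
      _ = (c:ℂ) * (if ((c':ℕ):ℤ) ∣ sS then E h A else 0) := by
          split_ifs <;> ring
  -- Step 3: the two units-indexed sums agree
  have match_eq :
      ∑ u : (ZMod h)ˣ, ∑ v : (ZMod h)ˣ,
            (if ((c' : ℕ) : ℤ) ∣ ((((u : ZMod h))⁻¹.val : ℤ) + (((v : ZMod h))⁻¹.val : ℤ)) then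
              E h ((((u : ZMod h)).val : ℤ) * m + (((v : ZMod h)).val : ℤ) * n) else 0)
        = ∑ b : (ZMod h)ˣ, ∑ g : (ZMod h)ˣ,
            (if F (b : ZMod h) = F (g : ZMod h) then
              E h ((((b : ZMod h))⁻¹.val : ℤ) * m - (((g : ZMod h))⁻¹.val : ℤ) * n) else 0) := by
    rw [← Equiv.sum_comp (Equiv.inv (ZMod h)ˣ)
      (fun u => ∑ v : (ZMod h)ˣ,
        (if ((c' : ℕ) : ℤ) ∣ ((((u : ZMod h))⁻¹.val : ℤ) + (((v : ZMod h))⁻¹.val : ℤ)) then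
          E h ((((u : ZMod h)).val : ℤ) * m + (((v : ZMod h)).val : ℤ) * n) else 0))]
    refine Finset.sum_congr rfl ?_
    intro b _
    rw [← Equiv.sum_comp ((Equiv.inv (ZMod h)ˣ).trans (Equiv.neg (ZMod h)ˣ))]
    refine Finset.sum_congr rfl ?_
    intro g _
    simp only [Equiv.inv_apply, Equiv.trans_apply, Equiv.neg_apply]
    have hb : ((b⁻¹ : (ZMod h)ˣ) : ZMod h)⁻¹ = (b : ZMod h) := by
      rw [ZMod.inv_coe_unit, inv_inv]
    have hg1 : (((-g⁻¹ : (ZMod h)ˣ)) : ZMod h)⁻¹ = -(g : ZMod h) := by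
      rw [ZMod.inv_coe_unit]
      simp
    have hcond : (((c' : ℕ) : ℤ) ∣
          ((((b⁻¹ : (ZMod h)ˣ) : ZMod h))⁻¹.val : ℤ) + ((((-g⁻¹ : (ZMod h)ˣ) : ZMod h))⁻¹.val : ℤ))
        ↔ (F (b : ZMod h) = F (g : ZMod h)) := by
      rw [hb, hg1, ← ZMod.intCast_zmod_eq_zero_iff_dvd]
      have hcv : ∀ x : ZMod h, ((x.val : ℤ) : ZMod c') = F x := by
        intro x
        rw [Int.cast_natCast, ZMod.natCast_val, hFdef, ZMod.castHom_apply]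
      rw [Int.cast_add, hcv, hcv, map_neg]
      constructor
      · intro h0; linear_combination h0
      · intro h0; rw [h0]; ring
    rw [if_congr hcond rfl rfl]
    by_cases hC : F (b : ZMod h) = F (g : ZMod h)
    · rw [if_pos hC, if_pos hC]
      refine (E_congr h hh ?_).symm
      push_cast [ZMod.natCast_val, ZMod.cast_id]
      rw [ZMod.inv_coe_unit, ZMod.inv_coe_unit]
      ring
    · rw [if_neg hC, if_neg hC]
  rw [lhs_eq, match_eq, ← rhs_eq]
  refine congrArg _ ?_
  refine Finset.sum_congr rfl fun β _ => Finset.sum_congr rfl fun γ _ => ?_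
  congr
end
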